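/- Let F : [0,∞) → ℝ be a cumulative distribution function of a nonnegative random variable (F nondecreasing, F(0) = 0, F(t) → 1 as t → ∞), continuously differentiable on [0,∞), satisfying the renewal equation F(t) = 2t/(1+t)³ + ∫₀ᵗ 2/(1+(t−y))³ · F(y) dy for all t ≥ 0. Then ∫₀ʰ t² F′(t) dt ~ h as h → ∞, i.e. (∫₀ʰ t² F′(t) dt)/h → 1 as h → ∞. -/

import Mathlib

/-
Put `G = 1 - F`. Integrating the renewal equation over `[0, T]` and exchanging the order of
integration gives the exact identity `∫₀ᵀ G(y) / (1 + T - y)² dy = T / (1 + T)²`. As `G` is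
nonincreasing, bounding `G(y)` below by `G(T)` gives `G(T) ≤ 1 / (1 + T)`; splitting the identity
for `T = x + r` at `x` gives a matching lower bound, hence `x G(x) → 1`. Integration by parts turns
`∫₀ʰ t² F'(t) dt` into `2 ∫₀ʰ t G(t) dt - h² G(h)`; after division by `h` the first term is twice
a Cesàro mean of `t G(t) → 1`, so the quotient tends to `2 - 1 = 1`.
-/

open MeasureTheory Filter Set Topology Real

lemma one_add_pos_of_mem_uIcc {u s : ℝ} (hu : -1 < u) (hs : s ∈ uIcc 0 u) : 0 < 1 + s := by
  have : min 0 u ≤ s := hs.1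
  have : -1 < min 0 u := lt_min (by norm_num) hu
  linarith

lemma hasDerivAt_one_add_pow (n : ℕ) (s : ℝ) :
    HasDerivAt (fun s : ℝ => (1 + s) ^ n) (n * (1 + s) ^ (n - 1)) s := by
  simpa using ((hasDerivAt_id' s).const_add 1).fun_pow n

lemma integral_one_div_one_add {u : ℝ} (hu : -1 < u) :
    ∫ s in (0:ℝ)..u, 1 / (1 + s) = log (1 + u) := by
  rw [intervalIntegral.integral_comp_add_left (fun s => 1 / s),
    integral_one_div_of_pos (by norm_num) (by linarith)]
  simp

lemma integral_one_div_one_add_pow_two {u : ℝ} (hu : -1 < u) :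
    ∫ s in (0:ℝ)..u, 1 / (1 + s) ^ 2 = u / (1 + u) := by
  have hderiv : ∀ s ∈ uIcc 0 u, HasDerivAt (fun s => s / (1 + s)) (1 / (1 + s) ^ 2) s := by
    intro s hs
    have h := one_add_pos_of_mem_uIcc hu hs
    refine ((hasDerivAt_id' s).fun_div ((hasDerivAt_id' s).const_add 1) h.ne').congr_deriv ?_
    field_simp
    simp
  have hcont : ContinuousOn (fun s : ℝ => 1 / (1 + s) ^ 2) (uIcc 0 u) :=
    continuousOn_const.div (by fun_prop) fun s hs =>
      (pow_pos (one_add_pos_of_mem_uIcc hu hs) 2).ne'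
  rw [intervalIntegral.integral_eq_sub_of_hasDerivAt hderiv hcont.intervalIntegrable]
  simp

lemma integral_two_div_one_add_pow_three {u : ℝ} (hu : -1 < u) :
    ∫ s in (0:ℝ)..u, 2 / (1 + s) ^ 3 = 1 - 1 / (1 + u) ^ 2 := by
  have hderiv : ∀ s ∈ uIcc 0 u, HasDerivAt (fun s => -1 / (1 + s) ^ 2) (2 / (1 + s) ^ 3) s := by
    intro s hs
    have h := one_add_pos_of_mem_uIcc hu hs
    refine ((hasDerivAt_const s (-1 : ℝ)).fun_div (hasDerivAt_one_add_pow 2 s)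
      (pow_pos h 2).ne').congr_deriv ?_
    field_simp
    ring
  have hcont : ContinuousOn (fun s : ℝ => 2 / (1 + s) ^ 3) (uIcc 0 u) :=
    continuousOn_const.div (by fun_prop) fun s hs =>
      (pow_pos (one_add_pos_of_mem_uIcc hu hs) 3).ne'
  rw [intervalIntegral.integral_eq_sub_of_hasDerivAt hderiv hcont.intervalIntegrable]
  ring

lemma integral_two_mul_div_one_add_pow_three {u : ℝ} (hu : -1 < u) :
    ∫ s in (0:ℝ)..u, 2 * s / (1 + s) ^ 3 = u ^ 2 / (1 + u) ^ 2 := by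
  have hderiv : ∀ s ∈ uIcc 0 u,
      HasDerivAt (fun s => s ^ 2 / (1 + s) ^ 2) (2 * s / (1 + s) ^ 3) s := by
    intro s hs
    have h := one_add_pos_of_mem_uIcc hu hs
    refine ((hasDerivAt_pow 2 s).fun_div (hasDerivAt_one_add_pow 2 s)
      (pow_pos h 2).ne').congr_deriv ?_
    field_simp
    norm_num
    ring
  have hcont : ContinuousOn (fun s : ℝ => 2 * s / (1 + s) ^ 3) (uIcc 0 u) :=
    (by fun_prop : Continuous fun s : ℝ => 2 * s).continuousOn.div (by fun_prop)
      fun s hs => (pow_pos (one_add_pos_of_mem_uIcc hu hs) 3).ne'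
  rw [intervalIntegral.integral_eq_sub_of_hasDerivAt hderiv hcont.intervalIntegrable]
  simp

lemma continuousOn_div_one_add_sub_pow (c T : ℝ) (n : ℕ) :
    ContinuousOn (fun y => c / (1 + (T - y)) ^ n) (Iic T) :=
  continuousOn_const.div (by fun_prop) fun y hy =>
    (pow_pos (by linarith [show y ≤ T from hy]) n).ne'

lemma integral_one_div_one_add_sub_pow_two {a T : ℝ} (h : -1 < T - a) :
    ∫ y in a..T, 1 / (1 + (T - y)) ^ 2 = (T - a) / (1 + (T - a)) := by
  rw [intervalIntegral.integral_comp_sub_left (fun s => 1 / (1 + s) ^ 2), sub_self,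
    integral_one_div_one_add_pow_two h]

lemma integrable_indicator_volterra {k f : ℝ → ℝ} (hk : ContinuousOn k (Ici 0))
    (hf : ContinuousOn f (Ici 0)) (T : ℝ) :
    Integrable (Function.uncurry fun t y => {p : ℝ × ℝ | 0 ≤ p.2 ∧ p.2 ≤ p.1 ∧ p.1 ≤ T}.indicator
      (fun p => k (p.1 - p.2) * f p.2) (t, y)) (volume.prod volume) := by
  have hΔ : IsCompact {p : ℝ × ℝ | 0 ≤ p.2 ∧ p.2 ≤ p.1 ∧ p.1 ≤ T} :=
    (isCompact_Icc.prod isCompact_Icc).of_isClosed_subset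
      ((isClosed_le continuous_const continuous_snd).inter
        ((isClosed_le continuous_snd continuous_fst).inter
          (isClosed_le continuous_fst continuous_const)))
      fun p ⟨h0, h1, h2⟩ => ⟨⟨h0.trans h1, h2⟩, h0, h1.trans h2⟩
  have hg : ContinuousOn (fun p : ℝ × ℝ => k (p.1 - p.2) * f p.2)
      {p : ℝ × ℝ | 0 ≤ p.2 ∧ p.2 ≤ p.1 ∧ p.1 ≤ T} :=
    (hk.comp (continuous_fst.sub continuous_snd).continuousOn
        fun p hp => sub_nonneg.2 hp.2.1).mul
      (hf.comp continuous_snd.continuousOn fun p hp => hp.1)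
  rw [← Measure.volume_eq_prod]
  exact (hg.integrableOn_compact hΔ).integrable_indicator hΔ.isClosed.measurableSet

theorem integral_integral_volterra_swap {k f : ℝ → ℝ} (hk : ContinuousOn k (Ici 0))
    (hf : ContinuousOn f (Ici 0)) {T : ℝ} (hT : 0 ≤ T) :
    ∫ t in (0:ℝ)..T, ∫ y in (0:ℝ)..t, k (t - y) * f y =
      ∫ y in (0:ℝ)..T, (∫ s in (0:ℝ)..T - y, k s) * f y := by
  have hswap := integral_integral_swap (integrable_indicator_volterra hk hf T)
  set Δ : Set (ℝ × ℝ) := {p | 0 ≤ p.2 ∧ p.2 ≤ p.1 ∧ p.1 ≤ T}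
  set g : ℝ × ℝ → ℝ := fun p => k (p.1 - p.2) * f p.2
  have hrow : ∀ t, ∫ y, Δ.indicator g (t, y) =
      (Icc 0 T).indicator (fun t => ∫ y in (0:ℝ)..t, k (t - y) * f y) t := by
    intro t
    by_cases ht : t ∈ Icc 0 T
    · rw [indicator_of_mem ht, intervalIntegral.integral_of_le ht.1,
        ← integral_Icc_eq_integral_Ioc, ← integral_indicator measurableSet_Icc]
      congr 1 with y
      simp only [Δ, g, indicator_apply, mem_ofPred_eq, mem_Icc, ht.2, and_true]
    · rw [indicator_of_notMem ht]
      refine integral_eq_zero_of_ae (ae_of_all _ fun y => indicator_of_notMem ?_ _)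
      exact fun ⟨h0, h1, h2⟩ => ht ⟨h0.trans h1, h2⟩
  have hcol : ∀ y, ∫ t, Δ.indicator g (t, y) =
      (Icc 0 T).indicator (fun y => (∫ s in (0:ℝ)..T - y, k s) * f y) y := by
    intro y
    by_cases hy : y ∈ Icc 0 T
    · rw [indicator_of_mem hy, ← sub_self y, ← intervalIntegral.integral_comp_sub_right,
        ← intervalIntegral.integral_mul_const, intervalIntegral.integral_of_le hy.2,
        ← integral_Icc_eq_integral_Ioc, ← integral_indicator measurableSet_Icc]
      congr 1 with t
      simp only [Δ, g, indicator_apply, mem_ofPred_eq, mem_Icc, hy.1, true_and]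
    · rw [indicator_of_notMem hy]
      refine integral_eq_zero_of_ae (ae_of_all _ fun t => indicator_of_notMem ?_ _)
      exact fun ⟨h0, h1, h2⟩ => hy ⟨h0, h1.trans h2⟩
  simp only [hrow, hcol, integral_indicator measurableSet_Icc] at hswap
  rwa [intervalIntegral.integral_of_le hT, intervalIntegral.integral_of_le hT,
    ← integral_Icc_eq_integral_Ioc, ← integral_Icc_eq_integral_Ioc]

theorem integral_mul_one_div_one_add_sub_pow_two_of_renewal {F : ℝ → ℝ}
    (hF : ContinuousOn F (Ici 0))
    (hrenewal : ∀ t, 0 ≤ t →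
      F t = 2 * t / (1 + t) ^ 3 + ∫ y in (0:ℝ)..t, 2 / (1 + (t - y)) ^ 3 * F y)
    {T : ℝ} (hT : 0 ≤ T) :
    ∫ y in (0:ℝ)..T, F y * (1 / (1 + (T - y)) ^ 2) = T ^ 2 / (1 + T) ^ 2 := by
  have hIcc : uIcc 0 T ⊆ Ici 0 ∩ Iic T := by
    rw [uIcc_of_le hT]; exact fun y hy => ⟨hy.1, hy.2⟩
  have hFi : IntervalIntegrable F volume 0 T :=
    (hF.mono fun y hy => (hIcc hy).1).intervalIntegrable
  have hzi : IntervalIntegrable (fun t => 2 * t / (1 + t) ^ 3) volume 0 T :=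
    ((by fun_prop : Continuous fun t : ℝ => 2 * t).continuousOn.div (by fun_prop)
      fun t ht => (pow_pos (by linarith [(hIcc ht).1.out]) 3).ne').intervalIntegrable
  have hkernel : ContinuousOn (fun s : ℝ => 2 / (1 + s) ^ 3) (Ici 0) :=
    continuousOn_const.div (by fun_prop) fun s hs =>
      (pow_pos (by linarith [show (0:ℝ) ≤ s from hs]) 3).ne'
  have hintegrated : ∫ t in (0:ℝ)..T, ∫ y in (0:ℝ)..t, 2 / (1 + (t - y)) ^ 3 * F y =
      (∫ t in (0:ℝ)..T, F t) - T ^ 2 / (1 + T) ^ 2 := by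
    rw [← integral_two_mul_div_one_add_pow_three (by linarith),
      ← intervalIntegral.integral_sub hFi hzi]
    refine intervalIntegral.integral_congr fun t ht => ?_
    rw [hrenewal t (hIcc ht).1]
    ring
  have hswapped : ∫ t in (0:ℝ)..T, ∫ y in (0:ℝ)..t, 2 / (1 + (t - y)) ^ 3 * F y =
      (∫ t in (0:ℝ)..T, F t) - ∫ y in (0:ℝ)..T, F y * (1 / (1 + (T - y)) ^ 2) := by
    rw [integral_integral_volterra_swap hkernel hF hT, ← intervalIntegral.integral_sub hFi
      (hFi.mul_continuousOn ((continuousOn_div_one_add_sub_pow 1 T 2).mono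
        fun y hy => (hIcc hy).2))]
    refine intervalIntegral.integral_congr fun y hy => ?_
    rw [integral_two_div_one_add_pow_three (by linarith [(hIcc hy).2.out])]
    ring
  linarith

theorem integral_one_sub_div_sq_eq_of_renewal {F : ℝ → ℝ} (hF : ContinuousOn F (Ici 0))
    (hrenewal : ∀ t, 0 ≤ t →
      F t = 2 * t / (1 + t) ^ 3 + ∫ y in (0:ℝ)..t, 2 / (1 + (t - y)) ^ 3 * F y)
    {T : ℝ} (hT : 0 ≤ T) :
    ∫ y in (0:ℝ)..T, (1 - F y) / (1 + (T - y)) ^ 2 = T / (1 + T) ^ 2 := by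
  have hK : ContinuousOn (fun y => 1 / (1 + (T - y)) ^ 2) (uIcc 0 T) :=
    (continuousOn_div_one_add_sub_pow 1 T 2).mono fun y hy => (uIcc_of_le hT ▸ hy).2
  calc ∫ y in (0:ℝ)..T, (1 - F y) / (1 + (T - y)) ^ 2
      = (∫ y in (0:ℝ)..T, 1 / (1 + (T - y)) ^ 2) -
          ∫ y in (0:ℝ)..T, F y * (1 / (1 + (T - y)) ^ 2) := by
        rw [← intervalIntegral.integral_sub hK.intervalIntegrable
          ((hF.mono fun y hy => (uIcc_of_le hT ▸ hy).1).intervalIntegrable.mul_continuousOn hK)]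
        congr 1 with y
        ring
    _ = T / (1 + T) - T ^ 2 / (1 + T) ^ 2 := by
        rw [integral_one_div_one_add_sub_pow_two (by linarith), sub_zero,
          integral_mul_one_div_one_add_sub_pow_two_of_renewal hF hrenewal hT]
    _ = T / (1 + T) ^ 2 := by
        field_simp
        ring

section ConvolutionTail

variable {G : ℝ → ℝ}

lemma AntitoneOn.intervalIntegrable_div_one_add_sub_pow_two (hG : AntitoneOn G (Ici 0))
    {a b T : ℝ} (ha : 0 ≤ a) (hab : a ≤ b) (hbT : b ≤ T) :
    IntervalIntegrable (fun y => G y / (1 + (T - y)) ^ 2) volume a b := by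
  have hGi : IntervalIntegrable G volume a b :=
    (hG.mono fun y hy => ha.trans (uIcc_of_le hab ▸ hy).1).intervalIntegrable
  simpa only [div_eq_mul_one_div (G _)] using hGi.mul_continuousOn
    ((continuousOn_div_one_add_sub_pow 1 T 2).mono fun y hy => (uIcc_of_le hab ▸ hy).2.trans hbT)

lemma intervalIntegrable_const_div_one_add_sub_pow_two (c : ℝ) {a b T : ℝ} (hab : a ≤ b)
    (hbT : b ≤ T) : IntervalIntegrable (fun y => c / (1 + (T - y)) ^ 2) volume a b :=
  ((continuousOn_div_one_add_sub_pow c T 2).mono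
    fun _ hy => (uIcc_of_le hab ▸ hy).2.trans hbT).intervalIntegrable

lemma integral_const_div_one_add_sub_pow_two (c : ℝ) {a T : ℝ} (h : -1 < T - a) :
    ∫ y in a..T, c / (1 + (T - y)) ^ 2 = c * ((T - a) / (1 + (T - a))) := by
  simp only [div_eq_mul_one_div c, intervalIntegral.integral_const_mul,
    integral_one_div_one_add_sub_pow_two h]

lemma le_one_div_one_add_of_integral_div_sq_eq (hG : AntitoneOn G (Ici 0))
    (hconv : ∀ T, 0 ≤ T → ∫ y in (0:ℝ)..T, G y / (1 + (T - y)) ^ 2 = T / (1 + T) ^ 2)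
    {T : ℝ} (hT : 0 < T) : G T ≤ 1 / (1 + T) := by
  have hbound : G T * (T / (1 + T)) ≤ 1 / (1 + T) * (T / (1 + T)) := by
    calc G T * (T / (1 + T)) = ∫ y in (0:ℝ)..T, G T / (1 + (T - y)) ^ 2 := by
          rw [integral_const_div_one_add_sub_pow_two _ (by linarith), sub_zero]
      _ ≤ ∫ y in (0:ℝ)..T, G y / (1 + (T - y)) ^ 2 := by
          refine intervalIntegral.integral_mono_on hT.le
            (intervalIntegrable_const_div_one_add_sub_pow_two _ hT.le le_rfl)
            (hG.intervalIntegrable_div_one_add_sub_pow_two le_rfl hT.le le_rfl) fun y hy => ?_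
          have : 0 < 1 + (T - y) := by linarith [hy.2]
          gcongr
          exact hG hy.1 hT.le hy.2
      _ = 1 / (1 + T) * (T / (1 + T)) := by
          rw [hconv T hT.le]
          field_simp
  exact le_of_mul_le_mul_right hbound (by positivity)

lemma sub_le_of_integral_div_sq_eq (hG : AntitoneOn G (Ici 0))
    (hconv : ∀ T, 0 ≤ T → ∫ y in (0:ℝ)..T, G y / (1 + (T - y)) ^ 2 = T / (1 + T) ^ 2)
    {x r : ℝ} (hx : 0 ≤ x) (hr : 0 ≤ r) (hGx : 0 ≤ G x) :
    (x + r) / (1 + (x + r)) ^ 2 - log (1 + x) / (1 + r) ^ 2 ≤ G x := by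
  set t := x + r
  have hxt : x ≤ t := by simp [t, hr]
  -- split `[0, t]` at `x`: on `[0, x]` use the upper bound on `G`, on `[x, t]` monotonicity
  have hhead : ∫ y in (0:ℝ)..x, G y / (1 + (t - y)) ^ 2 ≤ log (1 + x) / (1 + r) ^ 2 := by
    calc ∫ y in (0:ℝ)..x, G y / (1 + (t - y)) ^ 2
        ≤ ∫ y in (0:ℝ)..x, 1 / (1 + y) / (1 + r) ^ 2 := by
          refine intervalIntegral.integral_mono_on_of_le_Ioo hx
            (hG.intervalIntegrable_div_one_add_sub_pow_two le_rfl hx hxt)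
            ((continuousOn_const.div (by fun_prop) fun y hy =>
              (one_add_pos_of_mem_uIcc (by linarith) hy).ne').div_const _).intervalIntegrable
            fun y hy => ?_
          have := le_one_div_one_add_of_integral_div_sq_eq hG hconv hy.1
          have : 0 < 1 + y := by linarith [hy.1]
          gcongr
          simp only [t]
          linarith [hy.2]
      _ = log (1 + x) / (1 + r) ^ 2 := by
          rw [intervalIntegral.integral_div, integral_one_div_one_add (by linarith)]
  have htail : ∫ y in x..t, G y / (1 + (t - y)) ^ 2 ≤ G x := by
    calc ∫ y in x..t, G y / (1 + (t - y)) ^ 2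
        ≤ ∫ y in x..t, G x / (1 + (t - y)) ^ 2 := by
          refine intervalIntegral.integral_mono_on hxt
            (hG.intervalIntegrable_div_one_add_sub_pow_two hx hxt le_rfl)
            (intervalIntegrable_const_div_one_add_sub_pow_two _ hxt le_rfl) fun y hy => ?_
          have : 0 < 1 + (t - y) := by linarith [hy.2]
          gcongr
          exact hG hx (hx.trans hy.1) hy.1
      _ = G x * (r / (1 + r)) := by
          rw [integral_const_div_one_add_sub_pow_two _ (by simp [t]; linarith)]
          simp [t]
      _ ≤ G x := mul_le_of_le_one_right hGx (div_le_one_of_le₀ (by linarith) (by linarith))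
  have hsplit := intervalIntegral.integral_add_adjacent_intervals
    (hG.intervalIntegrable_div_one_add_sub_pow_two le_rfl hx hxt)
    (hG.intervalIntegrable_div_one_add_sub_pow_two hx hxt le_rfl)
  rw [hconv t (by positivity)] at hsplit
  linarith

end ConvolutionTail

lemma tendsto_mul_log_one_add_div_sq_atTop :
    Tendsto (fun x : ℝ => x * (log (1 + x) / (1 + (1 + x) ^ (3/4 : ℝ)) ^ 2)) atTop (𝓝 0) := by
  have hlog : Tendsto (fun x : ℝ => log (1 + x) / (1 + x) ^ (1/2 : ℝ)) atTop (𝓝 0) :=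
    (isLittleO_log_rpow_atTop (by norm_num)).tendsto_div_nhds_zero.comp
      (tendsto_atTop_add_const_left _ 1 tendsto_id)
  refine tendsto_of_tendsto_of_tendsto_of_le_of_le' tendsto_const_nhds hlog ?_ ?_
  · filter_upwards [eventually_ge_atTop 0] with x hx
    have := log_nonneg (by linarith : (1:ℝ) ≤ 1 + x)
    positivity
  · filter_upwards [eventually_ge_atTop 0] with x hx
    have hx1 : (0:ℝ) < 1 + x := by linarith
    have hsq : (1 + x) * (1 + x) ^ (1/2 : ℝ) ≤ (1 + (1 + x) ^ (3/4 : ℝ)) ^ 2 := by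
      have : ((1 + x) ^ (3/4 : ℝ)) ^ 2 = (1 + x) * (1 + x) ^ (1/2 : ℝ) := by
        rw [← rpow_natCast, ← rpow_mul hx1.le, ← rpow_one_add' hx1.le (by norm_num)]
        norm_num
      nlinarith [rpow_pos_of_pos hx1 (3/4 : ℝ)]
    calc x * (log (1 + x) / (1 + (1 + x) ^ (3/4 : ℝ)) ^ 2)
        ≤ (1 + x) * (log (1 + x) / ((1 + x) * (1 + x) ^ (1/2 : ℝ))) := by
          have := log_nonneg (by linarith : (1:ℝ) ≤ 1 + x)
          gcongr
          linarith
      _ = log (1 + x) / (1 + x) ^ (1/2 : ℝ) := by field_simp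

/- The lower bound of `sub_le_of_integral_div_sq_eq` for the window `r = (1 + x) ^ (3/4)`,
which is `o(x)` while `r ^ 2` still dominates `x * log x`. -/
lemma tendsto_mul_lower_bound :
    Tendsto (fun x : ℝ => x * ((x + (1 + x) ^ (3/4 : ℝ)) / (1 + (x + (1 + x) ^ (3/4 : ℝ))) ^ 2
      - log (1 + x) / (1 + (1 + x) ^ (3/4 : ℝ)) ^ 2)) atTop (𝓝 1) := by
  have hu : Tendsto (fun x : ℝ => 1 + x) atTop atTop :=
    tendsto_atTop_add_const_left _ 1 tendsto_id
  have hρ : Tendsto (fun x : ℝ => (1 + x) ^ (-(1/4) : ℝ)) atTop (𝓝 0) :=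
    (tendsto_rpow_neg_atTop (by norm_num)).comp hu
  have hinv : Tendsto (fun x : ℝ => (1 + x)⁻¹) atTop (𝓝 0) := tendsto_inv_atTop_zero.comp hu
  have hmain : Tendsto (fun x : ℝ => (1 - (1 + x)⁻¹) *
      ((1 - (1 + x)⁻¹ + (1 + x) ^ (-(1/4) : ℝ)) / (1 + (1 + x) ^ (-(1/4) : ℝ)) ^ 2))
      atTop (𝓝 1) := by
    have h1 : Tendsto (fun x : ℝ => 1 - (1 + x)⁻¹) atTop (𝓝 1) := by
      simpa using (tendsto_const_nhds (x := (1:ℝ))).sub hinv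
    simpa using h1.mul ((h1.add hρ).div ((tendsto_const_nhds.add hρ).pow 2)
      (by norm_num : ((1:ℝ) + 0) ^ 2 ≠ 0))
  refine (sub_zero (1:ℝ) ▸ hmain.sub tendsto_mul_log_one_add_div_sq_atTop).congr' ?_
  filter_upwards [eventually_ge_atTop 0] with x hx
  have hx1 : (0:ℝ) < 1 + x := by linarith
  have hr : (1 + x) ^ (3/4 : ℝ) = (1 + x) * (1 + x) ^ (-(1/4) : ℝ) := by
    rw [← rpow_one_add' hx1.le (by norm_num)]
    norm_num
  have := rpow_pos_of_pos hx1 (-(1/4) : ℝ)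
  rw [hr]
  field_simp
  ring

theorem tendsto_mul_of_integral_div_sq_eq {G : ℝ → ℝ} (hG : AntitoneOn G (Ici 0))
    (hG0 : ∀ x, 0 ≤ x → 0 ≤ G x)
    (hconv : ∀ T, 0 ≤ T → ∫ y in (0:ℝ)..T, G y / (1 + (T - y)) ^ 2 = T / (1 + T) ^ 2) :
    Tendsto (fun x => x * G x) atTop (𝓝 1) := by
  have hupper : Tendsto (fun x : ℝ => 1 - (1 + x)⁻¹) atTop (𝓝 1) := by
    simpa using (tendsto_const_nhds (x := (1:ℝ))).sub
      (tendsto_inv_atTop_zero.comp (tendsto_atTop_add_const_left _ 1 tendsto_id))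
  refine tendsto_of_tendsto_of_tendsto_of_le_of_le' tendsto_mul_lower_bound hupper ?_ ?_
  · filter_upwards [eventually_gt_atTop 0] with x hx
    exact mul_le_mul_of_nonneg_left (sub_le_of_integral_div_sq_eq hG hconv hx.le
      (by positivity) (hG0 x hx.le)) hx.le
  · filter_upwards [eventually_gt_atTop 0] with x hx
    calc x * G x ≤ x * (1 / (1 + x)) :=
          mul_le_mul_of_nonneg_left (le_one_div_one_add_of_integral_div_sq_eq hG hconv hx) hx.le
      _ = 1 - (1 + x)⁻¹ := by field_simp; ring

theorem tendsto_integral_div_self_of_tendsto {g : ℝ → ℝ} {c : ℝ}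
    (hg : ContinuousOn g (Ici 0)) (hlim : Tendsto g atTop (𝓝 c)) :
    Tendsto (fun h => (∫ t in (0:ℝ)..h, g t) / h) atTop (𝓝 c) := by
  have hint : ∀ a b : ℝ, 0 ≤ a → a ≤ b → IntervalIntegrable g volume a b :=
    fun a b ha hab => (hg.mono fun t ht => ha.trans (uIcc_of_le hab ▸ ht).1).intervalIntegrable
  have hsmall : (fun h => ∫ t in (0:ℝ)..h, (g t - c)) =o[atTop] id := by
    refine Asymptotics.isLittleO_iff.2 fun ε hε => ?_
    obtain ⟨M₀, hM₀⟩ := eventually_atTop.1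
      (hlim.eventually (Metric.closedBall_mem_nhds c (half_pos hε)))
    set M := max M₀ 0
    have hM0 : 0 ≤ M := le_max_right _ _
    set C := ‖∫ t in (0:ℝ)..M, (g t - c)‖
    filter_upwards [eventually_ge_atTop M, eventually_ge_atTop (2 * C / ε)] with h hMh hCh
    have hhead : C ≤ ε / 2 * h := by
      rw [div_le_iff₀ hε] at hCh
      linarith
    have hrest : ‖∫ t in M..h, (g t - c)‖ ≤ ε / 2 * |h - M| :=
      intervalIntegral.norm_integral_le_of_norm_le_const fun t ht =>
        hM₀ t (le_max_left _ _ |>.trans (uIoc_of_le hMh ▸ ht).1.le)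
    rw [← intervalIntegral.integral_add_adjacent_intervals
      ((hint 0 M le_rfl hM0).sub intervalIntegrable_const)
      ((hint M h hM0 hMh).sub intervalIntegrable_const)]
    rw [abs_of_nonneg (sub_nonneg.2 hMh)] at hrest
    rw [id, Real.norm_of_nonneg (hM0.trans hMh)]
    linarith [norm_add_le (∫ t in (0:ℝ)..M, (g t - c)) (∫ t in M..h, (g t - c)),
      mul_nonneg hε.le hM0]
  refine (zero_add c ▸ hsmall.tendsto_div_nhds_zero.add_const c).congr' ?_
  filter_upwards [eventually_gt_atTop 0] with h hh
  rw [intervalIntegral.integral_sub (hint 0 h le_rfl hh.le) intervalIntegrable_const,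
    intervalIntegral.integral_const, smul_eq_mul, id]
  field_simp
  ring

theorem integral_sq_mul_deriv_eq {F F' : ℝ → ℝ}
    (hderiv : ∀ t, 0 ≤ t → HasDerivWithinAt F (F' t) (Ici 0) t)
    (hcont : ContinuousOn F' (Ici 0)) {h : ℝ} (hh : 0 ≤ h) :
    ∫ t in (0:ℝ)..h, t ^ 2 * F' t =
      2 * (∫ t in (0:ℝ)..h, t * (1 - F t)) - h ^ 2 * (1 - F h) := by
  have hsub : uIcc 0 h ⊆ Ici 0 := fun t ht => (uIcc_of_le hh ▸ ht).1
  have hparts := intervalIntegral.integral_mul_deriv_eq_deriv_mul_of_hasDerivWithinAt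
    (u := fun t => t ^ 2) (v := fun t => F t - 1)
    (fun t _ => (hasDerivAt_pow 2 t).hasDerivWithinAt)
    (fun t ht => ((hderiv t (hsub ht)).sub_const 1).mono hsub)
    ((by fun_prop : Continuous fun t : ℝ => (2 : ℕ) * t ^ (2 - 1)).intervalIntegrable _ _)
    ((hcont.mono hsub).intervalIntegrable)
  rw [hparts]
  have : ∀ t : ℝ, ((2 : ℕ) : ℝ) * t ^ (2 - 1) * (F t - 1) = -(2 * (t * (1 - F t))) := by
    intro t; push_cast; ring
  simp only [this, intervalIntegral.integral_neg, intervalIntegral.integral_const_mul]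
  ring

theorem truncated_second_moment_asymptotic_general
    (F F' : ℝ → ℝ)
    (hmono : ∀ a b : ℝ, 0 ≤ a → a ≤ b → F a ≤ F b)
    (hlim : Filter.Tendsto F atTop (nhds 1))
    (hderiv : ∀ t, 0 ≤ t → HasDerivWithinAt F (F' t) (Ici 0) t)
    (hcont : ContinuousOn F' (Ici 0))
    (hrenewal : ∀ t, 0 ≤ t →
      F t = 2 * t / (1 + t) ^ 3 + ∫ y in (0:ℝ)..t, 2 / (1 + (t - y)) ^ 3 * F y) :
    Filter.Tendsto
      (fun h : ℝ => (∫ t in (0:ℝ)..h, t ^ 2 * F' t) / h)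
      atTop (nhds 1) := by
  have hF : ContinuousOn F (Ici 0) := fun t ht => (hderiv t ht).continuousWithinAt
  have hF_le_one : ∀ x, 0 ≤ x → F x ≤ 1 := fun x hx =>
    ge_of_tendsto hlim (eventually_atTop.2 ⟨x, fun y hy => hmono x y hx hy⟩)
  have htail : Tendsto (fun x => x * (1 - F x)) atTop (𝓝 1) :=
    tendsto_mul_of_integral_div_sq_eq (fun x hx y _ hxy => sub_le_sub_left (hmono x y hx hxy) 1)
      (fun x hx => sub_nonneg.2 (hF_le_one x hx))
      (fun T hT => integral_one_sub_div_sq_eq_of_renewal hF hrenewal hT)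
  have hmean := tendsto_integral_div_self_of_tendsto (g := fun x => x * (1 - F x))
    (continuousOn_id.mul (continuousOn_const.sub hF)) htail
  have hlimit := (hmean.const_mul 2).sub htail
  rw [show (2:ℝ) * 1 - 1 = 1 by norm_num] at hlimit
  refine hlimit.congr' ?_
  filter_upwards [eventually_gt_atTop 0] with h hh
  rw [integral_sq_mul_deriv_eq hderiv hcont hh.le]
  field_simp

/-- For the CDF `F` solving the renewal equation,
`∫₀ʰ t² F'(t) dt ~ h` as `h → ∞`. -/
theorem truncated_second_moment_asymptotic
    (F F' : ℝ → ℝ)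
    (hmono : ∀ a b : ℝ, 0 ≤ a → a ≤ b → F a ≤ F b)
    (hzero : F 0 = 0)
    (hlim : Filter.Tendsto F atTop (nhds 1))
    (hderiv : ∀ t, 0 ≤ t → HasDerivWithinAt F (F' t) (Ici 0) t)
    (hcont : ContinuousOn F' (Ici 0))
    (hrenewal : ∀ t, 0 ≤ t →
      F t = 2 * t / (1 + t) ^ 3 + ∫ y in (0:ℝ)..t, 2 / (1 + (t - y)) ^ 3 * F y) :
    Filter.Tendsto
      (fun h : ℝ => (∫ t in (0:ℝ)..h, t ^ 2 * F' t) / h)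
      atTop (nhds 1) :=
  truncated_second_moment_asymptotic_general F F' hmono hlim hderiv hcont hrenewal
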